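/- arXiv:2003.12866 — 8 statements merged into one kernel-verified Lean document; each statement's English description precedes it below -/
import Mathlib

section
/- Let G be a finite group and let A, B be subsets of G such that G = A·B is a factorization (i.e., the multiplication map A × B → G is a bijection). Then the cardinality of A divides the order of the subgroup of G generated by A. -/
/-- For a finite group `G` and subsets `A, B` such that `G = A·B` is a factorization
(the multiplication map `A × B → G` is a bijection), `card A` divides the order of
the subgroup generated by `A`. -/
theorem stmt_0 {G : Type*} [Group G] [Fintype G] (A B : Set G)
    (hfac : Function.Bijective (fun p : A × B => (p.1 : G) * (p.2 : G))) :
    Nat.card A ∣ Nat.card (Subgroup.closure A) := by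
  set H := Subgroup.closure A with hH
  have hA : A ⊆ (H : Set G) := Subgroup.subset_closure
  let f : A × {b : B // (b : G) ∈ H} → H :=
    fun p => ⟨(p.1 : G) * (p.2.1 : G), mul_mem (hA p.1.2) p.2.2⟩
  have hinj : Function.Injective f := by
    intro p q hpq
    have h1 : (p.1, p.2.1) = (q.1, q.2.1) := by
      apply hfac.injective
      simpa [f, Subtype.ext_iff] using hpq
    obtain ⟨h2, h3⟩ := Prod.mk.injEq _ _ _ _ ▸ h1
    exact Prod.ext h2 (Subtype.ext h3)
  have hsurj : Function.Surjective f := by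
    rintro ⟨h, hh⟩
    obtain ⟨⟨a, b⟩, hab⟩ := hfac.surjective h
    simp only at hab
    have hbH : (b : G) ∈ H := by
      have : (b : G) = (a : G)⁻¹ * h := by rw [← hab]; group
      rw [this]
      exact mul_mem (inv_mem (hA a.2)) hh
    exact ⟨⟨a, ⟨b, hbH⟩⟩, Subtype.ext hab⟩
  have hcard : Nat.card H = Nat.card A * Nat.card {b : B // (b : G) ∈ H} := by
    rw [← Nat.card_prod]
    exact (Nat.card_eq_of_bijective f ⟨hinj, hsurj⟩).symm
  exact ⟨_, hcard⟩
end

section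
/- Let G be a finite group and let A, B be subsets of G such that G = A·B is a factorization (i.e., the multiplication map A × B → G is a bijection). Then the cardinality of B divides the order of the subgroup of G generated by B. -/
/-- For a finite group `G` and subsets `A, B` such that `G = A·B` is a factorization
(the multiplication map `A × B → G` is a bijection), `card B` divides the order of
the subgroup generated by `B`. -/
theorem stmt_1 {G : Type*} [Group G] [Fintype G] (A B : Set G)
    (hfac : Function.Bijective (fun p : A × B => (p.1 : G) * (p.2 : G))) :
    Nat.card B ∣ Nat.card (Subgroup.closure B) := by
  set H := Subgroup.closure B with hH
  have hB : ∀ b ∈ B, b ∈ H := fun b hb => Subgroup.subset_closure hb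
  let f : (A ∩ (H : Set G) : Set G) × B → H := fun p =>
    ⟨(p.1 : G) * p.2, mul_mem p.1.2.2 (hB _ p.2.2)⟩
  have hf : Function.Bijective f := by
    constructor
    · rintro ⟨⟨a, ha, haH⟩, b⟩ ⟨⟨a', ha', haH'⟩, b'⟩ h
      have : (fun p : A × B => (p.1 : G) * (p.2 : G)) (⟨a, ha⟩, b)
          = (fun p : A × B => (p.1 : G) * (p.2 : G)) (⟨a', ha'⟩, b') := by
        simpa [f, Subtype.ext_iff] using h
      have := hfac.injective this
      simp only [Prod.ext_iff, Subtype.ext_iff] at this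
      simp [Prod.ext_iff, Subtype.ext_iff, this.1, this.2]
    · rintro ⟨h, hh⟩
      obtain ⟨⟨a, b⟩, hab⟩ := hfac.surjective h
      simp only at hab
      have haH : (a : G) ∈ H := by
        have : (a : G) = h * (b : G)⁻¹ := by rw [← hab]; group
        rw [this]
        exact mul_mem hh (inv_mem (hB _ b.2))
      exact ⟨⟨⟨a, a.2, haH⟩, b⟩, by simp [f, Subtype.ext_iff, hab]⟩
  have := Nat.card_eq_of_bijective f hf
  rw [Nat.card_prod] at this
  exact ⟨_, by rw [← this, Nat.mul_comm]⟩
end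

section
/- Let G be the alternating group on 4 elements (a group of order 12). Then G has no factorization G = A₁·A₂·A₃ with card(A₁) = 2, card(A₂) = 3, and card(A₃) = 2; that is, there are no subsets A₁, A₂, A₃ of G with these cardinalities such that the multiplication map A₁ × A₂ × A₃ → G is a bijection. -/
private def tblN : Nat := 2085998830172206099211866115498099842349871403073631414779375934501273733791186720714270473408052783850564890092665981089260666378316432472670300306994540

private def tbl (i j : Fin 12) : Fin 12 := ⟨tblN / 12 ^ (i.val * 12 + j.val) % 12, Nat.mod_lt _ (by norm_num)⟩

private def e : Fin 12 → alternatingGroup (Fin 4) :=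
  ![⟨⟨![0, 1, 2, 3], ![0, 1, 2, 3], by decide, by decide⟩, Equiv.Perm.mem_alternatingGroup.mpr (by decide)⟩,
    ⟨⟨![0, 2, 3, 1], ![0, 3, 1, 2], by decide, by decide⟩, Equiv.Perm.mem_alternatingGroup.mpr (by decide)⟩,
    ⟨⟨![0, 3, 1, 2], ![0, 2, 3, 1], by decide, by decide⟩, Equiv.Perm.mem_alternatingGroup.mpr (by decide)⟩,
    ⟨⟨![1, 0, 3, 2], ![1, 0, 3, 2], by decide, by decide⟩, Equiv.Perm.mem_alternatingGroup.mpr (by decide)⟩,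
    ⟨⟨![1, 2, 0, 3], ![2, 0, 1, 3], by decide, by decide⟩, Equiv.Perm.mem_alternatingGroup.mpr (by decide)⟩,
    ⟨⟨![1, 3, 2, 0], ![3, 0, 2, 1], by decide, by decide⟩, Equiv.Perm.mem_alternatingGroup.mpr (by decide)⟩,
    ⟨⟨![2, 0, 1, 3], ![1, 2, 0, 3], by decide, by decide⟩, Equiv.Perm.mem_alternatingGroup.mpr (by decide)⟩,
    ⟨⟨![2, 1, 3, 0], ![3, 1, 0, 2], by decide, by decide⟩, Equiv.Perm.mem_alternatingGroup.mpr (by decide)⟩,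
    ⟨⟨![2, 3, 0, 1], ![2, 3, 0, 1], by decide, by decide⟩, Equiv.Perm.mem_alternatingGroup.mpr (by decide)⟩,
    ⟨⟨![3, 0, 2, 1], ![1, 3, 2, 0], by decide, by decide⟩, Equiv.Perm.mem_alternatingGroup.mpr (by decide)⟩,
    ⟨⟨![3, 1, 0, 2], ![2, 1, 3, 0], by decide, by decide⟩, Equiv.Perm.mem_alternatingGroup.mpr (by decide)⟩,
    ⟨⟨![3, 2, 1, 0], ![3, 2, 1, 0], by decide, by decide⟩, Equiv.Perm.mem_alternatingGroup.mpr (by decide)⟩]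

private theorem e_mul : ∀ i j, e i * e j = e (tbl i j) := by decide

private theorem e_surj : ∀ g : alternatingGroup (Fin 4), ∃ i, e i = g := by decide

private theorem e_zero : e 0 = 1 := by decide

set_option maxHeartbeats 16000000 in
private theorem coreB : ∀ i j k l : Fin 12,
    i = 0 ∨ j = 0 ∨ k = 0 ∨ l = 0 ∨ j = k ∨
    2^(0:Fin 12).val + 2^l.val + 2^j.val + 2^(tbl j l).val + 2^k.val + 2^(tbl k l).val
      + 2^i.val + 2^(tbl i l).val + 2^(tbl i j).val + 2^(tbl (tbl i j) l).val
      + 2^(tbl i k).val + 2^(tbl (tbl i k) l).val ≠ 4095 := by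
  decide

private theorem core (x y z w : alternatingGroup (Fin 4)) (hx : x ≠ 1) (hy : y ≠ 1)
    (hz : z ≠ 1) (hyz : y ≠ z) (hw : w ≠ 1) :
    ¬ ([1, w, y, y*w, z, z*w, x, x*w, x*y, x*y*w, x*z, x*z*w] :
        List (alternatingGroup (Fin 4))).Nodup := by
  obtain ⟨i, rfl⟩ := e_surj x
  obtain ⟨j, rfl⟩ := e_surj y
  obtain ⟨k, rfl⟩ := e_surj z
  obtain ⟨l, rfl⟩ := e_surj w
  intro hnd
  have hL : ([1, e l, e j, e j * e l, e k, e k * e l, e i, e i * e l, e i * e j,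
      e i * e j * e l, e i * e k, e i * e k * e l] : List (alternatingGroup (Fin 4)))
      = ([0, l, j, tbl j l, k, tbl k l, i, tbl i l, tbl i j, tbl (tbl i j) l, tbl i k,
          tbl (tbl i k) l] : List (Fin 12)).map e := by
    simp [e_mul, e_zero]
  rw [hL] at hnd
  have hnd' := hnd.of_map e
  have hfin : ([0, l, j, tbl j l, k, tbl k l, i, tbl i l, tbl i j, tbl (tbl i j) l, tbl i k,
      tbl (tbl i k) l] : List (Fin 12)).toFinset = Finset.univ := by
    apply Finset.eq_univ_of_card
    rw [List.toFinset_card_of_nodup hnd']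
    simp
  have hsum : (([0, l, j, tbl j l, k, tbl k l, i, tbl i l, tbl i j, tbl (tbl i j) l, tbl i k,
      tbl (tbl i k) l] : List (Fin 12)).map (fun m => 2 ^ m.val)).sum = 4095 := by
    rw [← List.sum_toFinset _ hnd', hfin]
    decide
  have hi : i ≠ 0 := fun h => hx (by rw [h, e_zero])
  have hj : j ≠ 0 := fun h => hy (by rw [h, e_zero])
  have hk : k ≠ 0 := fun h => hz (by rw [h, e_zero])
  have hl : l ≠ 0 := fun h => hw (by rw [h, e_zero])
  have hjk : j ≠ k := fun h => hyz (by rw [h])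
  rcases coreB i j k l with h | h | h | h | h | h
  · exact hi h
  · exact hj h
  · exact hk h
  · exact hl h
  · exact hjk h
  · apply h
    simpa [add_assoc] using hsum

private theorem main_aux {G : Type*} [Group G] (a a' b b' b'' c c' : G)
    (hbij : Function.Bijective
      (fun p : ({a, a'} : Set G) × ({b, b', b''} : Set G) × ({c, c'} : Set G) =>
        (p.1 : G) * (p.2.1 : G) * (p.2.2 : G)))
    (haa : a ≠ a') (hbb' : b ≠ b') (hbb'' : b ≠ b'') (hb'b'' : b' ≠ b'') (hcc : c ≠ c') :
    ([1, c'*c⁻¹, b⁻¹*b', (b⁻¹*b')*(c'*c⁻¹), b⁻¹*b'', (b⁻¹*b'')*(c'*c⁻¹),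
      b⁻¹*a⁻¹*a'*b, (b⁻¹*a⁻¹*a'*b)*(c'*c⁻¹), (b⁻¹*a⁻¹*a'*b)*(b⁻¹*b'),
      (b⁻¹*a⁻¹*a'*b)*(b⁻¹*b')*(c'*c⁻¹), (b⁻¹*a⁻¹*a'*b)*(b⁻¹*b''),
      (b⁻¹*a⁻¹*a'*b)*(b⁻¹*b'')*(c'*c⁻¹)] : List G).Nodup := by
  have ha1 : a ∈ ({a, a'} : Set G) := by simp
  have ha2 : a' ∈ ({a, a'} : Set G) := by simp
  have hb1 : b ∈ ({b, b', b''} : Set G) := by simp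
  have hb2 : b' ∈ ({b, b', b''} : Set G) := by simp
  have hb3 : b'' ∈ ({b, b', b''} : Set G) := by simp
  have hc1 : c ∈ ({c, c'} : Set G) := by simp
  have hc2 : c' ∈ ({c, c'} : Set G) := by simp
  have hptsnd : ([(⟨a, ha1⟩, ⟨b, hb1⟩, ⟨c, hc1⟩), (⟨a, ha1⟩, ⟨b, hb1⟩, ⟨c', hc2⟩),
     (⟨a, ha1⟩, ⟨b', hb2⟩, ⟨c, hc1⟩), (⟨a, ha1⟩, ⟨b', hb2⟩, ⟨c', hc2⟩),
     (⟨a, ha1⟩, ⟨b'', hb3⟩, ⟨c, hc1⟩), (⟨a, ha1⟩, ⟨b'', hb3⟩, ⟨c', hc2⟩),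
     (⟨a', ha2⟩, ⟨b, hb1⟩, ⟨c, hc1⟩), (⟨a', ha2⟩, ⟨b, hb1⟩, ⟨c', hc2⟩),
     (⟨a', ha2⟩, ⟨b', hb2⟩, ⟨c, hc1⟩), (⟨a', ha2⟩, ⟨b', hb2⟩, ⟨c', hc2⟩),
     (⟨a', ha2⟩, ⟨b'', hb3⟩, ⟨c, hc1⟩), (⟨a', ha2⟩, ⟨b'', hb3⟩, ⟨c', hc2⟩)] :
      List (({a, a'} : Set G) × ({b, b', b''} : Set G) × ({c, c'} : Set G))).Nodup := by
    simp only [List.nodup_cons, List.mem_cons, List.not_mem_nil, or_false,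
      List.nodup_nil, and_true, Prod.mk.injEq, Subtype.mk.injEq, not_or]
    refine ⟨?_, ?_, ?_, ?_, ?_, ?_, ?_, ?_, ?_, ?_, ?_⟩ <;> tauto
  have hφinj : Function.Injective (fun t : G => (a * b)⁻¹ * t * c⁻¹) :=
    fun s t h => mul_left_cancel (mul_right_cancel h)
  have hmapped := (hptsnd.map hbij.1).map hφinj
  simp only [List.map_cons, List.map_nil] at hmapped
  convert hmapped using 2 <;> group

private theorem conj_ne_one {G : Type*} [Group G] {a a' b : G} (h : a ≠ a') :
    b⁻¹ * a⁻¹ * a' * b ≠ 1 := by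
  intro hh
  apply h
  have := congrArg (fun t => a * (b * t * b⁻¹)) hh
  simpa [mul_assoc] using this.symm

private theorem inv_mul_ne_one {G : Type*} [Group G] {b b' : G} (h : b ≠ b') :
    b⁻¹ * b' ≠ 1 := by
  intro hh
  apply h
  have := congrArg (fun t => b * t) hh
  simpa [mul_assoc] using this.symm

private theorem mul_inv_ne_one {G : Type*} [Group G] {c c' : G} (h : c ≠ c') :
    c' * c⁻¹ ≠ 1 := by
  intro hh
  apply h
  have := congrArg (fun t => t * c) hh
  simpa [mul_assoc] using this.symm

/-- The alternating group on 4 elements has no factorization `A₁·A₂·A₃` with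
`card A₁ = 2`, `card A₂ = 3`, `card A₃ = 2`. -/
theorem stmt_4 :
    ¬ ∃ A₁ A₂ A₃ : Set (alternatingGroup (Fin 4)),
        Nat.card A₁ = 2 ∧ Nat.card A₂ = 3 ∧ Nat.card A₃ = 2 ∧
        Function.Bijective
          (fun p : A₁ × A₂ × A₃ =>
            (p.1 : alternatingGroup (Fin 4)) * (p.2.1 : alternatingGroup (Fin 4)) *
              (p.2.2 : alternatingGroup (Fin 4))) := by
  rintro ⟨A₁, A₂, A₃, h1, h2, h3, hbij⟩
  rw [Nat.card_coe_set_eq] at h1 h2 h3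
  obtain ⟨a, a', haa, rfl⟩ := Set.ncard_eq_two.mp h1
  obtain ⟨b, b', b'', hbb', hbb'', hb'b'', rfl⟩ := Set.ncard_eq_three.mp h2
  obtain ⟨c, c', hcc, rfl⟩ := Set.ncard_eq_two.mp h3
  exact core (b⁻¹*a⁻¹*a'*b) (b⁻¹*b') (b⁻¹*b'') (c'*c⁻¹)
    (conj_ne_one haa) (inv_mul_ne_one hbb') (inv_mul_ne_one hbb'')
    (fun h => hb'b'' (mul_left_cancel h)) (mul_inv_ne_one hcc)
    (main_aux a a' b b' b'' c c' hbij haa hbb' hbb'' hb'b'' hcc)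
end

section
/- Let G be a finite group, k a positive integer, and A₁, …, A_k subsets of G such that G = A₁·…·A_k is a factorization. Then card(A₁) divides the order of the subgroup of G generated by the set A₁⁻¹A₁ = { g⁻¹ h : g, h ∈ A₁ }. -/
/-!
Splitting off the first factor, `G = A₁ · B` is a factorization, where `B` is the set of products
of the remaining factors. For `a ∈ A₁`, the translate `a⁻¹A₁` still factorizes `G` with `B` and lies
in `H = ⟨A₁⁻¹A₁⟩`, so every `h ∈ H` is uniquely `x · b` with `x ∈ a⁻¹A₁` and then necessarily
`b ∈ B ∩ H`. Hence `|H| = |A₁| · |B ∩ H|`.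
-/

open scoped Pointwise

namespace Subgroup

variable {G : Type*} [Group G] {S T : Set G}

theorem IsComplement.smul_left (h : IsComplement S T) (g : G) : IsComplement (g • S) T := by
  rw [isComplement_iff_existsUnique] at h ⊢
  intro x
  obtain ⟨⟨s, t⟩, hst, huniq⟩ := h (g⁻¹ * x)
  refine ⟨(⟨g * s, Set.smul_mem_smul_set s.2⟩, t), ?_, ?_⟩
  · simp only [mul_assoc, hst, mul_inv_cancel_left]
  · rintro ⟨⟨_, s', hs', rfl⟩, t'⟩ hst'
    have := huniq (⟨s', hs'⟩, t')
      (by simp only [← hst', smul_eq_mul, mul_assoc, inv_mul_cancel_left])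
    simp only [Prod.ext_iff, Subtype.ext_iff] at this ⊢
    exact ⟨by rw [this.1]; rfl, this.2⟩

theorem IsComplement.card_mul_card_inter_of_subset (h : IsComplement S T) {H : Subgroup G}
    (hS : S ⊆ H) : Nat.card S * Nat.card (T ∩ H : Set G) = Nat.card H := by
  rw [← Nat.card_prod]
  refine Nat.card_congr (Equiv.ofBijective
    (fun p => ⟨p.1 * p.2, mul_mem (hS p.1.2) p.2.2.2⟩) ⟨?_, ?_⟩)
  · rintro ⟨s, t⟩ ⟨s', t'⟩ heq
    have := @h.1 (s, ⟨t, t.2.1⟩) (s', ⟨t', t'.2.1⟩) (congrArg Subtype.val heq)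
    simp only [Prod.ext_iff, Subtype.ext_iff] at this ⊢
    exact this
  · rintro ⟨x, hx⟩
    obtain ⟨⟨s, t⟩, hst : (s : G) * t = x⟩ := h.2 x
    have htH : (t : G) ∈ H := by
      rw [← inv_mul_cancel_left (s : G) t, hst]
      exact mul_mem (inv_mem (hS s.2)) hx
    exact ⟨(s, ⟨t, t.2, htH⟩), Subtype.ext hst⟩

theorem isComplement_head_range_prod_tail {n : ℕ} {A : Fin (n + 1) → Set G}
    (hfac : Function.Bijective
      (fun a : (∀ i, A i) => (List.ofFn (fun i => (a i : G))).prod)) :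
    IsComplement (A 0)
      (Set.range fun t : (∀ i : Fin n, A i.succ) => (List.ofFn (fun i => (t i : G))).prod) := by
  set P := fun t : (∀ i : Fin n, A i.succ) => (List.ofFn (fun i => (t i : G))).prod
  have hsplit : (fun a : (∀ i, A i) => (List.ofFn (fun i => (a i : G))).prod) ∘
      Fin.consEquiv (fun i => A i) =
      (fun x : A 0 × Set.range P => (x.1 : G) * x.2) ∘ fun p => (p.1, ⟨P p.2, p.2, rfl⟩) := by
    ext ⟨a, t⟩
    simp [P, Fin.consEquiv, List.ofFn_succ]
  have hbij := hfac.comp (Fin.consEquiv _).bijective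
  rw [hsplit] at hbij
  exact ⟨hbij.1.of_comp_right fun ⟨a, _, t, rfl⟩ => ⟨(a, t), rfl⟩, hbij.2.of_comp⟩

end Subgroup

theorem stmt_6_general {G : Type*} [Group G] (k : ℕ) (hk : 0 < k) (A : Fin k → Set G)
    (hfac : Function.Bijective
      (fun a : (∀ i : Fin k, A i) => (List.ofFn (fun i : Fin k => (a i : G))).prod)) :
    Nat.card (A ⟨0, hk⟩) ∣
      Nat.card (Subgroup.closure ((A ⟨0, hk⟩)⁻¹ * A ⟨0, hk⟩)) := by
  obtain ⟨n, rfl⟩ := Nat.exists_eq_succ_of_ne_zero hk.ne'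
  have hc : Subgroup.IsComplement (A ⟨0, hk⟩) _ := Subgroup.isComplement_head_range_prod_tail hfac
  obtain ⟨a, ha⟩ := hc.nonempty_left
  have hsub : a⁻¹ • A ⟨0, hk⟩ ⊆ Subgroup.closure ((A ⟨0, hk⟩)⁻¹ * A ⟨0, hk⟩) := by
    rintro _ ⟨b, hb, rfl⟩
    exact Subgroup.subset_closure (Set.mul_mem_mul (Set.inv_mem_inv.2 ha) hb)
  have hcard := (hc.smul_left a⁻¹).card_mul_card_inter_of_subset hsub
  rw [Set.natCard_smul_set] at hcard
  exact Dvd.intro _ hcard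

/-- If `A₁·…·A_k` is a factorization of a finite group `G`, then `card A₁` divides
the order of the subgroup of `G` generated by `A₁⁻¹ A₁ = {g⁻¹ h | g, h ∈ A₁}`. -/
theorem stmt_6 {G : Type*} [Group G] [Fintype G] (k : ℕ) (hk : 0 < k) (A : Fin k → Set G)
    (hfac : Function.Bijective
      (fun a : (∀ i : Fin k, A i) => (List.ofFn (fun i : Fin k => (a i : G))).prod)) :
    Nat.card (A ⟨0, hk⟩) ∣
      Nat.card (Subgroup.closure ((A ⟨0, hk⟩)⁻¹ * A ⟨0, hk⟩)) :=
  stmt_6_general k hk A hfac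
end

section
/- Let G be a finite group, k a positive integer, and A₁, …, A_k subsets of G such that G = A₁·…·A_k is a factorization. Then card(A_k) divides the order of the subgroup of G generated by the set A_k A_k⁻¹ = { g h⁻¹ : g, h ∈ A_k }. -/
open scoped Pointwise

/-- If `A₁·…·A_k` is a factorization of a finite group `G`, then `card A_k` divides
the order of the subgroup of `G` generated by `A_k A_k⁻¹ = {g h⁻¹ | g, h ∈ A_k}`. -/
theorem stmt_10 {G : Type*} [Group G] [Fintype G] (k : ℕ) (hk : 0 < k) (A : Fin k → Set G)
    (hfac : Function.Bijective
      (fun a : (∀ i : Fin k, A i) => (List.ofFn (fun i : Fin k => (a i : G))).prod)) :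
    Nat.card (A ⟨k - 1, Nat.sub_lt hk one_pos⟩) ∣
      Nat.card (Subgroup.closure
        (A ⟨k - 1, Nat.sub_lt hk one_pos⟩ * (A ⟨k - 1, Nat.sub_lt hk one_pos⟩)⁻¹)) := by
  obtain ⟨n, rfl⟩ : ∃ n, k = n + 1 := ⟨k - 1, (Nat.succ_pred_eq_of_pos hk).symm⟩
  set l : Fin (n + 1) := ⟨n + 1 - 1, Nat.sub_lt hk one_pos⟩ with hl
  have hll : l = Fin.last n := rfl
  set B : Set G := A l with hB
  set H : Subgroup G := Subgroup.closure (B * B⁻¹) with hH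
  set f : (∀ i : Fin (n+1), A i) → G :=
    fun a => (List.ofFn (fun i : Fin (n+1) => (a i : G))).prod with hf
  set p : (∀ i : Fin (n+1), A i) → G :=
    fun a => (List.ofFn (fun i : Fin n => (a i.castSucc : G))).prod with hp
  obtain ⟨a₀, -⟩ := hfac.2 1
  set b₀ : B := a₀ l with hb₀
  have hmemH : ∀ (x y : B), ((x : G) * (y : G)⁻¹) ∈ H := fun x y =>
    Subgroup.subset_closure (Set.mul_mem_mul x.2 (Set.inv_mem_inv.mpr y.2))
  have hsplit : ∀ a, f a = p a * (a l : G) := by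
    intro a
    simp only [hf, hp, List.ofFn_succ', List.concat_eq_append, List.prod_append,
      List.prod_cons, List.prod_nil, mul_one]
    rw [hll]
  have hpu : ∀ (a : ∀ i : Fin (n+1), A i) (b : A l),
      p (Function.update a l b) = p a := by
    intro a b
    have hfun : (fun i : Fin n => ((Function.update a l b) i.castSucc : G))
        = fun i : Fin n => (a i.castSucc : G) := by
      funext i
      rw [Function.update_of_ne (hll ▸ (Fin.castSucc_lt_last i).ne)]
    simp only [hp, hfun]
  have e1 : H ≃ {g : G // g * (b₀ : G)⁻¹ ∈ H} :=
  { toFun := fun h => ⟨(h : G) * (b₀ : G), by simp [h.2]⟩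
    invFun := fun g => ⟨(g : G) * (b₀ : G)⁻¹, g.2⟩
    left_inv := fun h => by ext; simp
    right_inv := fun g => by ext; simp }
  have e2 : {a // f a * (b₀ : G)⁻¹ ∈ H} ≃ {g : G // g * (b₀ : G)⁻¹ ∈ H} :=
    (Equiv.ofBijective f hfac).subtypeEquiv (fun a => Iff.rfl)
  have e3 : {a // f a * (b₀ : G)⁻¹ ∈ H} ≃ {a // p a ∈ H} :=
    Equiv.subtypeEquivRight (fun a => by
      rw [hsplit, mul_assoc]
      exact mul_mem_cancel_right (hmemH (a l) b₀))
  have e4 : {a // p a ∈ H} ≃ {a : ∀ i : Fin (n+1), A i // p a ∈ H ∧ a l = b₀} × B :=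
  { toFun := fun a => (⟨Function.update a.1 l b₀,
      by rw [hpu]; exact a.2, Function.update_self ..⟩, a.1 l)
    invFun := fun x => ⟨Function.update x.1.1 l x.2, by rw [hpu]; exact x.1.2.1⟩
    left_inv := fun ⟨a, ha⟩ => Subtype.ext (by
      show Function.update (Function.update a l b₀) l (a l) = a
      rw [Function.update_idem, Function.update_eq_self])
    right_inv := fun ⟨⟨a, ha, hal⟩, b⟩ => by
      refine Prod.ext (Subtype.ext ?_) ?_
      · show Function.update (Function.update a l b) l b₀ = a
        rw [Function.update_idem, ← hal, Function.update_eq_self]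
      · exact Function.update_self ..}
  have key : Nat.card H =
      Nat.card {a : ∀ i : Fin (n+1), A i // p a ∈ H ∧ a l = b₀} * Nat.card B := by
    rw [Nat.card_congr ((e1.trans e2.symm).trans (e3.trans e4)), Nat.card_prod]
  rw [key]
  exact dvd_mul_left _ _
end

section
/- Let G be a finite group, k a positive integer, and A₁, …, A_k subsets of G such that G = A₁·…·A_k is a factorization. Then for every index i with 1 < i < k, card(A_i) divides the order of the normal closure in G (the smallest normal subgroup containing the set) of the set A_i⁻¹A_i = { g⁻¹ h : g, h ∈ A_i }. -/
open scoped Pointwise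

/-- Splitting the product of `List.ofFn v` at index `i`. -/
lemma prod_ofFn_split {G : Type*} [Group G] {k : ℕ} (v : Fin k → G) (i : Fin k) :
    (List.ofFn v).prod =
      ((List.ofFn v).take i).prod * v i * ((List.ofFn v).drop (i + 1)).prod := by
  have hlen : (i : ℕ) < (List.ofFn v).length := by simp [i.isLt]
  conv_lhs => rw [← List.take_append_drop (i : ℕ) (List.ofFn v)]
  rw [List.drop_eq_getElem_cons hlen, List.prod_append, List.prod_cons,
    List.getElem_ofFn, mul_assoc]

lemma take_ofFn_congr {G : Type*} {k : ℕ} (v w : Fin k → G) (i : Fin k)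
    (h : ∀ j : Fin k, j ≠ i → v j = w j) :
    (List.ofFn v).take i = (List.ofFn w).take i := by
  apply List.ext_getElem (by simp)
  intro n h1 h2
  have hn : n < (i : ℕ) := by simpa using h1
  have hnk : n < k := lt_of_lt_of_le hn (le_of_lt i.isLt)
  rw [List.getElem_take, List.getElem_take, List.getElem_ofFn, List.getElem_ofFn]
  exact h ⟨n, hnk⟩ (by intro hc; exact absurd (congrArg Fin.val hc) (by simp; omega))

lemma drop_ofFn_congr {G : Type*} {k : ℕ} (v w : Fin k → G) (i : Fin k)
    (h : ∀ j : Fin k, j ≠ i → v j = w j) :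
    (List.ofFn v).drop (i + 1) = (List.ofFn w).drop (i + 1) := by
  apply List.ext_getElem (by simp)
  intro n h1 h2
  have hnk : (i : ℕ) + 1 + n < k := by simp at h1; omega
  rw [List.getElem_drop, List.getElem_drop, List.getElem_ofFn, List.getElem_ofFn]
  exact h ⟨(i : ℕ) + 1 + n, hnk⟩
    (by intro hc; exact absurd (congrArg Fin.val hc) (by simp; omega))

/-- If `A₁·…·A_k` is a factorization of a finite group `G`, then for every index `i`
with `1 < i < k` (in one-based terms; here `0 < i.val` and `i.val < k - 1`),
`card (A i)` divides the order of the normal closure of `(A i)⁻¹ (A i)`. -/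
theorem stmt_11 {G : Type*} [Group G] [Fintype G] (k : ℕ) (A : Fin k → Set G)
    (hfac : Function.Bijective
      (fun a : (∀ i : Fin k, A i) => (List.ofFn (fun i : Fin k => (a i : G))).prod))
    (i : Fin k) (hi₁ : 0 < i.val) (hi₂ : i.val < k - 1) :
    Nat.card (A i) ∣ Nat.card (Subgroup.normalClosure ((A i)⁻¹ * A i)) := by
  classical
  set N := Subgroup.normalClosure ((A i)⁻¹ * A i) with hN
  set φ : (∀ j : Fin k, A j) → G :=
    fun a => (List.ofFn (fun j : Fin k => (a j : G))).prod with hφ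
  obtain ⟨f₁, -⟩ := hfac.2 1
  set a₀ : A i := f₁ i with ha₀
  -- key lemma: the class of φ f in G ⧸ N depends only on coordinates ≠ i
  have key : ∀ f g : ∀ j : Fin k, A j, (∀ j, j ≠ i → f j = g j) →
      ((φ f : G) : G ⧸ N) = ((φ g : G) : G ⧸ N) := by
    intro f g h
    rw [QuotientGroup.eq]
    have hf := prod_ofFn_split (fun j : Fin k => (f j : G)) i
    have hg := prod_ofFn_split (fun j : Fin k => (g j : G)) i
    have hT := take_ofFn_congr (fun j : Fin k => (f j : G)) (fun j => (g j : G)) i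
      (fun j hj => congrArg _ (h j hj))
    have hD := drop_ofFn_congr (fun j : Fin k => (f j : G)) (fun j => (g j : G)) i
      (fun j hj => congrArg _ (h j hj))
    set P := ((List.ofFn (fun j : Fin k => (g j : G))).take i).prod with hP
    set Q := ((List.ofFn (fun j : Fin k => (g j : G))).drop (i + 1)).prod with hQ
    have hfe : (φ f : G) = P * (f i : G) * Q := by
      simp only [hφ]; rw [hf, hT, hD]
    have hge : (φ g : G) = P * (g i : G) * Q := by
      simp only [hφ]; rw [hg]
    have hmem : ((f i : G))⁻¹ * (g i : G) ∈ N :=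
      Subgroup.subset_normalClosure
        (Set.mul_mem_mul (Set.inv_mem_inv.2 (f i).2) (g i).2)
    have heq : (φ f : G)⁻¹ * (φ g : G)
        = Q⁻¹ * (((f i : G))⁻¹ * (g i : G)) * (Q⁻¹)⁻¹ := by
      rw [hfe, hge]; group
    rw [heq]
    exact Subgroup.Normal.conj_mem (Subgroup.normalClosure_normal) _ hmem Q⁻¹
  -- split the index set at i
  set P := Equiv.piSplitAt i (fun j : Fin k => (A j : Set G)) with hPdef
  set r : (∀ j : { j : Fin k // j ≠ i }, A (j : Fin k)) → G ⧸ N :=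
    fun t => ((φ (P.symm (a₀, t)) : G) : G ⧸ N) with hr
  have hρ : ∀ f : ∀ j : Fin k, A j, ((φ f : G) : G ⧸ N) = r (P f).2 := by
    intro f
    refine key f (P.symm (a₀, (P f).2)) ?_
    intro j hj
    simp [hPdef, Equiv.piSplitAt, hj]
  -- choose a coset
  set c : G ⧸ N := ((φ f₁ : G) : G ⧸ N) with hc
  set E : (∀ j : Fin k, A j) ≃ G := Equiv.ofBijective φ hfac with hE
  have e1 : { f : ∀ j : Fin k, A j // ((φ f : G) : G ⧸ N) = c } ≃
      { x : G // (x : G ⧸ N) = c } :=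
    E.subtypeEquiv (fun f => Iff.rfl)
  have e2 : { f : ∀ j : Fin k, A j // ((φ f : G) : G ⧸ N) = c } ≃
      { p : ↥(A i) × (∀ j : { j : Fin k // j ≠ i }, A (j : Fin k)) // r p.2 = c } :=
    P.subtypeEquiv (fun f => by rw [hρ f])
  have e3 : { p : ↥(A i) × (∀ j : { j : Fin k // j ≠ i }, A (j : Fin k)) // r p.2 = c }
      ≃ ↥(A i) × { t : ∀ j : { j : Fin k // j ≠ i }, A (j : Fin k) // r t = c } :=
    { toFun := fun p => (p.1.1, ⟨p.1.2, p.2⟩)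
      invFun := fun x => ⟨(x.1, x.2.1), x.2.2⟩
      left_inv := fun p => rfl
      right_inv := fun x => rfl }
  have e4 : { x : G // (x : G ⧸ N) = c } ≃
      ((QuotientGroup.mk ⁻¹' ({c} : Set (G ⧸ N))) : Set G) :=
    Equiv.subtypeEquivRight (fun x => by simp [Set.mem_preimage])
  have hcard : Nat.card N = Nat.card (A i) *
      Nat.card { t : ∀ j : { j : Fin k // j ≠ i }, A (j : Fin k) // r t = c } := by
    have h1 : Nat.card ((QuotientGroup.mk ⁻¹' ({c} : Set (G ⧸ N))) : Set G)
        = Nat.card N := by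
      rw [Nat.card_congr (QuotientGroup.preimageMkEquivSubgroupProdSet N _),
        Nat.card_prod]
      simp
    calc Nat.card N
        = Nat.card { x : G // (x : G ⧸ N) = c } := by
          rw [← h1, Nat.card_congr e4]
      _ = Nat.card { f : ∀ j : Fin k, A j // ((φ f : G) : G ⧸ N) = c } :=
          (Nat.card_congr e1).symm
      _ = Nat.card (↥(A i) ×
            { t : ∀ j : { j : Fin k // j ≠ i }, A (j : Fin k) // r t = c }) := by
          rw [Nat.card_congr (e2.trans e3)]
      _ = _ := by rw [Nat.card_prod]
  exact Dvd.intro _ hcard.symm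
end

section
/- Let G be a finite group, k a positive integer, and A₁, …, A_k subsets of G such that G = A₁·…·A_k is a factorization, and let i be an index with 1 < i < k. Let K be the subgroup of G generated by the product set A₁⋯A_{i−1}, and let H be the subgroup of G generated by A_i. Then card(A_i) divides the order of the subgroup M of G generated by the conjugates k H k⁻¹ of H by all members k of K. -/
open scoped Pointwise

private lemma mem_ofFn_prod {G : Type*} [Group G] : ∀ {n : ℕ} (As : Fin n → Set G)
    (f : Fin n → G), (∀ j, f j ∈ As j) → (List.ofFn f).prod ∈ (List.ofFn As).prod
  | 0, As, f, h => by simp [Set.mem_one]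
  | n+1, As, f, h => by
    rw [List.ofFn_succ, List.ofFn_succ, List.prod_cons, List.prod_cons]
    exact Set.mul_mem_mul (h 0) (mem_ofFn_prod _ _ (fun j => h j.succ))

private def prodSubtypeSnd {α β : Type*} {p : β → Prop} :
    {x : α × β // p x.2} ≃ α × {b // p b} where
  toFun x := (x.1.1, ⟨x.1.2, x.2⟩)
  invFun y := ⟨(y.1, y.2.1), y.2.2⟩
  left_inv x := rfl
  right_inv y := rfl

/-- Let `A₁·…·A_k` be a factorization of a finite group `G`, and let `i` be an index
with `1 < i < k` (one-based; here `0 < i.val < k - 1`). Let `K` be the subgroup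
generated by the product set `A₁⋯A_{i-1}`, and `H` the subgroup generated by `A_i`.
Then `card (A i)` divides the order of the subgroup `M` generated by the conjugates
of `H` by all members of `K`. -/
theorem stmt_15 {G : Type*} [Group G] [Fintype G] (k : ℕ) (A : Fin k → Set G)
    (hfac : Function.Bijective
      (fun a : (∀ i : Fin k, A i) => (List.ofFn (fun i : Fin k => (a i : G))).prod))
    (i : Fin k) (hi₁ : 0 < i.val) (hi₂ : i.val < k - 1)
    (K : Subgroup G)
    (hK : K = Subgroup.closure
      ((List.ofFn (fun j : Fin i.val => A ⟨j.val, lt_trans j.isLt i.isLt⟩)).prod : Set G))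
    (H : Subgroup G) (hH : H = Subgroup.closure (A i))
    (M : Subgroup G)
    (hM : M = Subgroup.closure (⋃ x ∈ K, (fun h : G => x * h * x⁻¹) '' (H : Set G))) :
    Nat.card (A i) ∣ Nat.card M := by
  classical
  set φ : (∀ j : Fin k, A j) → G :=
    fun a => (List.ofFn (fun j : Fin k => (a j : G))).prod with hφ
  -- Key: if `a` and `a'` agree off `i`, then `φ a * (φ a')⁻¹ ∈ M`.
  have key : ∀ a a' : (∀ j : Fin k, A j), (∀ j, j ≠ i → (a j : G) = (a' j : G)) →
      φ a * (φ a')⁻¹ ∈ M := by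
    intro a a' hagree
    set l : List G := List.ofFn (fun j : Fin k => (a j : G)) with hl
    set l' : List G := List.ofFn (fun j : Fin k => (a' j : G)) with hl'
    have hik : i.val < l.length := by simpa [l] using i.isLt
    have hik' : i.val < l'.length := by simpa [l'] using i.isLt
    have split : ∀ (m : List G) (hm : i.val < m.length),
        m.prod = (m.take i.val).prod * m[i.val] * (m.drop (i.val+1)).prod := by
      intro m hm
      rw [mul_assoc, ← List.prod_cons, ← List.drop_eq_getElem_cons hm,
        List.prod_take_mul_prod_drop]
    have htake : l.take i.val = l'.take i.val := by
      apply List.ext_getElem (by simp [l, l'])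
      intro j h1 h2
      rw [List.getElem_take, List.getElem_take]
      have hjk : j < k := by
        have := h1; simp only [List.length_take, List.length_ofFn, l] at this; omega
      have hji : j < i.val := by
        have := h1; simp only [List.length_take, List.length_ofFn, l] at this; omega
      simp only [l, l', List.getElem_ofFn]
      exact hagree _ (by simp [Fin.ext_iff]; omega)
    have hdrop : l.drop (i.val+1) = l'.drop (i.val+1) := by
      apply List.ext_getElem (by simp [l, l'])
      intro j h1 h2
      rw [List.getElem_drop, List.getElem_drop]
      simp only [l, l', List.getElem_ofFn]
      exact hagree _ (by simp [Fin.ext_iff]; omega)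
    have hT : (l.take i.val).prod ∈ K := by
      rw [hK]
      apply Subgroup.subset_closure
      have heq : l.take i.val
          = List.ofFn (fun j : Fin i.val => ((a ⟨j.val, lt_trans j.isLt i.isLt⟩ : A _) : G)) := by
        apply List.ext_getElem (by simp [l])
        intro j h1 h2
        rw [List.getElem_take]
        simp only [l, List.getElem_ofFn]
      rw [heq]
      exact mem_ofFn_prod _ _ (fun j => (a _).2)
    have hgi : l[i.val] = (a i : G) := by
      simp only [l, List.getElem_ofFn]
    have hgi' : l'[i.val] = (a' i : G) := by
      simp only [l', List.getElem_ofFn]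
    have hs : (a i : G) * (a' i : G)⁻¹ ∈ H := by
      rw [hH]
      exact mul_mem (Subgroup.subset_closure (a i).2)
        (inv_mem (Subgroup.subset_closure (a' i).2))
    have e1 : φ a = (l.take i.val).prod * (a i : G) * (l.drop (i.val+1)).prod := by
      show l.prod = _
      rw [split l hik, hgi]
    have e2 : φ a' = (l.take i.val).prod * (a' i : G) * (l.drop (i.val+1)).prod := by
      show l'.prod = _
      rw [split l' hik', hgi', ← htake, ← hdrop]
    have hconj : φ a * (φ a')⁻¹
        = (l.take i.val).prod * ((a i : G) * (a' i : G)⁻¹) * ((l.take i.val).prod)⁻¹ := by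
      rw [e1, e2]; group
    rw [hconj, hM]
    apply Subgroup.subset_closure
    refine Set.mem_iUnion₂.mpr ⟨(l.take i.val).prod, hT, ?_⟩
    exact ⟨(a i : G) * (a' i : G)⁻¹, hs, rfl⟩
  -- Counting via the quotient G ⧸ M.
  obtain ⟨a₀, -⟩ := hfac.surjective 1
  let e := Equiv.piSplitAt i (fun j : Fin k => ↥(A j))
  let F : (∀ j : Fin k, A j) → G ⧸ M := fun a => ((φ a)⁻¹ : G)
  let F' : (∀ j : {j : Fin k // j ≠ i}, A (j : Fin k)) → G ⧸ M :=
    fun b => F (e.symm (a₀ i, b))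
  have hFF' : ∀ a, F a = F' (e a).2 := by
    intro a
    show QuotientGroup.mk _ = QuotientGroup.mk _
    rw [QuotientGroup.eq]
    simp only [inv_inv]
    apply key
    intro j hj
    simp only [e, Equiv.piSplitAt_symm_apply, dif_neg hj, Equiv.piSplitAt_apply]
  -- fibers over the coset of 1
  let c : G ⧸ M := ((1 : G) : G ⧸ M)
  have hψ : Function.Bijective (fun a => (φ a)⁻¹ : (∀ j : Fin k, A j) → G) :=
    (Equiv.inv G).bijective.comp hfac
  have eqB : {a : (∀ j : Fin k, A j) // F a = c} ≃ ↥M := by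
    have e1 : {a : (∀ j : Fin k, A j) // F a = c} ≃ {g : G // (g : G ⧸ M) = c} :=
      Equiv.subtypeEquiv (Equiv.ofBijective _ hψ) (fun a => Iff.rfl)
    refine e1.trans (Equiv.subtypeEquivRight (q := fun g => g ∈ M) (fun g => ?_))
    show (g : G ⧸ M) = ((1 : G) : G ⧸ M) ↔ g ∈ M
    rw [QuotientGroup.eq]
    simp [inv_mem_iff]
  have eqA : {a : (∀ j : Fin k, A j) // F a = c}
      ≃ ↥(A i) × {b // F' b = c} := by
    have mid : {a : (∀ j : Fin k, A j) // F a = c}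
        ≃ {p : ↥(A i) × (∀ j : {j : Fin k // j ≠ i}, ↥(A (j : Fin k))) // F' p.2 = c} :=
      Equiv.subtypeEquiv e (fun a => by rw [hFF' a])
    exact mid.trans (prodSubtypeSnd (α := ↥(A i)) (p := fun b => F' b = c))
  have hcard : Nat.card ↥M = Nat.card (A i) * Nat.card {b // F' b = c} := by
    rw [← Nat.card_congr eqB, Nat.card_congr eqA, Nat.card_prod]
  exact ⟨_, hcard⟩
end

section
/- Let G be a finite group, k a positive integer, and A₁, …, A_k subsets of G such that G = A₁·…·A_k is a factorization, and let i be an index with 1 < i < k. Let K′ be the subgroup of G generated by the product set A_{i+1}⋯A_k, and let H be the subgroup of G generated by A_i. Then card(A_i) divides the order of the subgroup M′ of G generated by the conjugates k H k⁻¹ of H by all members k of K′. -/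
open scoped Pointwise

private lemma myListProdMem {G : Type*} [Monoid G] {x : List G} {l : List (Set G)}
    (h : List.Forall₂ (· ∈ ·) x l) : x.prod ∈ l.prod := by
  induction h with
  | nil => simp [Set.mem_one]
  | cons hx _ ih => simpa using Set.mul_mem_mul hx ih

private lemma myProdSplit {M : Type*} [Monoid M] (l : List M) (n : ℕ) (h : n < l.length) :
    l.prod = (l.take n).prod * l[n] * (l.drop (n + 1)).prod := by
  conv_lhs => rw [← List.take_append_drop n l]
  rw [List.prod_append, List.drop_eq_getElem_cons h, List.prod_cons, mul_assoc]

private lemma myOfFnTake {α : Type*} {k : ℕ} (f : Fin k → α) (n : ℕ) (h : n ≤ k) :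
    (List.ofFn f).take n = List.ofFn (fun j : Fin n => f ⟨j.1, lt_of_lt_of_le j.2 h⟩) := by
  apply List.ext_getElem
  · simp [h]
  · intro m h1 h2
    simp

private lemma myOfFnDrop {α : Type*} {k : ℕ} (f : Fin k → α) (n : ℕ) (h : n ≤ k) :
    (List.ofFn f).drop n = List.ofFn (fun j : Fin (k - n) => f ⟨n + j.1, by omega⟩) := by
  apply List.ext_getElem
  · simp
  · intro m h1 h2
    simp

/-- Let `A₁·…·A_k` be a factorization of a finite group `G`, and let `i` be an index
with `1 < i < k` (one-based; here `0 < i.val < k - 1`). Let `K'` be the subgroup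
generated by the product set `A_{i+1}⋯A_k`, and `H` the subgroup generated by `A_i`.
Then `card (A i)` divides the order of the subgroup `M'` generated by the conjugates
of `H` by all members of `K'`. -/
theorem stmt_16 {G : Type*} [Group G] [Fintype G] (k : ℕ) (A : Fin k → Set G)
    (hfac : Function.Bijective
      (fun a : (∀ i : Fin k, A i) => (List.ofFn (fun i : Fin k => (a i : G))).prod))
    (i : Fin k) (hi₁ : 0 < i.val) (hi₂ : i.val < k - 1)
    (K' : Subgroup G)
    (hK' : K' = Subgroup.closure
      ((List.ofFn (fun j : Fin (k - (i.val + 1)) =>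
        A ⟨i.val + 1 + j.val, by omega⟩)).prod : Set G))
    (H : Subgroup G) (hH : H = Subgroup.closure (A i))
    (M' : Subgroup G)
    (hM' : M' = Subgroup.closure (⋃ x ∈ K', (fun h : G => x * h * x⁻¹) '' (H : Set G))) :
    Nat.card (A i) ∣ Nat.card M' := by
  classical
  have hik : i.val < k := i.2
  -- A i ⊆ M'
  have hAM : ∀ g ∈ A i, g ∈ M' := by
    intro g hg
    rw [hM']
    apply Subgroup.subset_closure
    refine Set.mem_iUnion.2 ⟨1, Set.mem_iUnion.2 ⟨one_mem _, ⟨g, ?_, by group⟩⟩⟩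
    rw [hH]; exact Subgroup.subset_closure hg
  -- K' normalizes M'
  have hconj : ∀ x ∈ K', ∀ m ∈ M', x * m * x⁻¹ ∈ M' := by
    intro x hx m hm
    rw [hM'] at hm ⊢
    refine Subgroup.closure_induction (fun y hy => ?_) (by simpa using one_mem _)
      (fun y z hy hz py pz => ?_) (fun y hy py => ?_) hm
    · obtain ⟨s, hs⟩ := Set.mem_iUnion.1 hy
      obtain ⟨hsK, hy'⟩ := Set.mem_iUnion.1 hs
      obtain ⟨h, hhH, rfl⟩ := hy'
      apply Subgroup.subset_closure
      refine Set.mem_iUnion.2 ⟨x * s, Set.mem_iUnion.2 ⟨mul_mem hx hsK, ⟨h, hhH, by group⟩⟩⟩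
    · have := mul_mem py pz
      convert this using 1
      group
    · have := inv_mem py
      convert this using 1
      group
  have hconj' : ∀ c ∈ K', ∀ m ∈ M', c⁻¹ * m * c ∈ M' := by
    intro c hc m hm
    simpa using hconj c⁻¹ (inv_mem hc) m hm
  set f : (∀ j : Fin k, A j) → G :=
    fun a => (List.ofFn (fun j : Fin k => (a j : G))).prod with hfdef
  set Q := ∀ j : { j : Fin k // j ≠ i }, ↥(A j.1) with hQdef
  set Bq : Q → G := fun q =>
    (List.ofFn (fun j : Fin i.val =>
      (q ⟨⟨j.1, Nat.lt_trans j.2 hik⟩, Fin.ne_of_val_ne (Nat.ne_of_lt j.2)⟩ : G))).prod with hBdef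
  set Cq : Q → G := fun q =>
    (List.ofFn (fun j : Fin (k - (i.val + 1)) =>
      (q ⟨⟨i.val + 1 + j.1, by omega⟩,
        Fin.ne_of_val_ne (show i.val + 1 + j.1 ≠ i.val by omega)⟩ : G))).prod with hCdef
  -- Cq q ∈ K'
  have hCK : ∀ q : Q, Cq q ∈ K' := by
    intro q
    rw [hK']
    apply Subgroup.subset_closure
    apply myListProdMem
    rw [List.forall₂_iff_get]
    constructor
    · simp
    · intro m h1 h2
      simp only [List.length_ofFn] at h1 h2
      simp only [List.get_eq_getElem, List.getElem_ofFn]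
      exact (q ⟨⟨i.val + 1 + m, by omega⟩,
        Fin.ne_of_val_ne (show i.val + 1 + m ≠ i.val by omega)⟩).2
  -- key split
  have hkey : ∀ (x : ↥(A i)) (q : Q),
      f ((Equiv.piSplitAt i fun j : Fin k => ↥(A j)).symm (x, q)) ∈ M' ↔ Bq q * Cq q ∈ M' := by
    intro x q
    set a := (Equiv.piSplitAt i fun j : Fin k => ↥(A j)).symm (x, q) with hadef
    have h2 := (Equiv.piSplitAt i fun j : Fin k => ↥(A j)).apply_symm_apply (x, q)
    rw [Equiv.piSplitAt_apply, ← hadef, Prod.mk.injEq] at h2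
    have ha_i : a i = x := h2.1
    have ha_ne : ∀ (j : { j : Fin k // j ≠ i }), a j.1 = q j := fun j => congrFun h2.2 j
    have hlen : i.val < (List.ofFn (fun j : Fin k => (a j : G))).length := by
      simp [hik]
    have hsplit := myProdSplit _ i.val hlen
    have hgot : (List.ofFn (fun j : Fin k => (a j : G)))[i.val] = (x : G) := by
      simp only [List.getElem_ofFn]
      rw [show (⟨i.val, hik⟩ : Fin k) = i from Fin.eta i hik, ha_i]
    have hB : ((List.ofFn (fun j : Fin k => (a j : G))).take i.val).prod = Bq q := by
      rw [myOfFnTake _ _ (le_of_lt hik)]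
      exact congrArg List.prod (congrArg List.ofFn (funext fun j =>
        congrArg Subtype.val (ha_ne ⟨⟨j.1, Nat.lt_trans j.2 hik⟩,
          Fin.ne_of_val_ne (Nat.ne_of_lt j.2)⟩)))
    have hC : ((List.ofFn (fun j : Fin k => (a j : G))).drop (i.val + 1)).prod = Cq q := by
      rw [myOfFnDrop _ (i.val + 1) (by omega)]
      exact congrArg List.prod (congrArg List.ofFn (funext fun j =>
        congrArg Subtype.val (ha_ne ⟨⟨i.val + 1 + j.1, by omega⟩,
          Fin.ne_of_val_ne (show i.val + 1 + j.1 ≠ i.val by omega)⟩)))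
    have hf : f a = Bq q * (x : G) * Cq q := by
      rw [hfdef]; dsimp only; rw [hsplit, hgot, hB, hC]
    rw [hf]
    have hxM : ((Cq q)⁻¹ * (x : G) * Cq q) ∈ M' := hconj' _ (hCK q) _ (hAM _ x.2)
    rw [show Bq q * (x : G) * Cq q = (Bq q * Cq q) * ((Cq q)⁻¹ * (x : G) * Cq q) by group]
    exact M'.mul_mem_cancel_right hxM
  -- counting
  have card1 : Nat.card M' = Nat.card { a : (∀ j : Fin k, A j) // f a ∈ M' } :=
    Nat.card_congr (Equiv.subtypeEquiv (Equiv.ofBijective f hfac) (fun a => Iff.rfl)).symm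
  have card2 : Nat.card { a : (∀ j : Fin k, A j) // f a ∈ M' }
      = Nat.card { p : ↥(A i) × Q // Bq p.2 * Cq p.2 ∈ M' } := by
    refine Nat.card_congr
      (((Equiv.piSplitAt i fun j : Fin k => ↥(A j)).subtypeEquiv (fun a => ?_)).trans
        (Equiv.subtypeEquivRight (fun p => hkey p.1 p.2)))
    rw [Equiv.symm_apply_apply]
  have card3 : Nat.card { p : ↥(A i) × Q // Bq p.2 * Cq p.2 ∈ M' }
      = Nat.card (A i) * Nat.card { q : Q // Bq q * Cq q ∈ M' } := by
    rw [← Nat.card_prod]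
    exact Nat.card_congr ⟨fun p => (p.1.1, ⟨p.1.2, p.2⟩), fun z => ⟨(z.1, z.2.1), z.2.2⟩,
      fun p => rfl, fun z => rfl⟩
  rw [card1, card2, card3]
  exact dvd_mul_right _ _
end
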